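/- Let L be a pseudo-Finsler metric on a conic domain A over Ω ⊆ ℝⁿ and let Γ be a Chern connection of (L,A). Let D ⊆ ℝ² be open, let Λ : D → U be smooth into an open set U ⊆ Ω, and let V, U₀, W̃ be smooth vector fields on U such that V is L-admissible, V(Λ(t,s)) = ∂Λ/∂t (t,s) and U₀(Λ(t,s)) = ∂Λ/∂s (t,s) for all (t,s) ∈ D. Write W(t,s) := W̃(Λ(t,s)), let D_t denote the covariant derivative along the t-parameter curves of Λ with reference t ↦ (∂Λ/∂t) and D_s the covariant derivative along the s-parameter curves of Λ with the same reference (∂Λ/∂t). Then, letting R^V denote the curvature tensor of the connection datum x ↦ Γ(x,V(x)) on U, for all (t,s) ∈ D: (R^V(V,U₀)W̃)(Λ(t,s)) = (D_t D_s W)(t,s) − (D_s D_t W)(t,s). -/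

import Mathlib

noncomputable section

open scoped Topology

/-- Vectors in `ℝⁿ`. -/
abbrev Vec (n : ℕ) := Fin n → ℝ

/-- Continuous bilinear maps `ℝⁿ × ℝⁿ → ℝⁿ` (as iterated continuous linear maps). -/
abbrev Bil (n : ℕ) := Vec n →L[ℝ] Vec n →L[ℝ] Vec n

/-- The fundamental tensor of `L`:
`g_{(x,v)}(u,w) = ½ ∂²/∂t∂s L(x, v + t u + s w)|₀`. -/
def gF {n : ℕ} (L : Vec n × Vec n → ℝ) (x v u w : Vec n) : ℝ :=
  (1 / 2) * deriv (fun t : ℝ => deriv (fun s : ℝ => L (x, v + t • u + s • w)) 0) 0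

/-- The Cartan tensor of `L`:
`C_{(x,v)}(w₁,w₂,w₃) = ¼ ∂³/∂s₁∂s₂∂s₃ L(x, v + s₁w₁ + s₂w₂ + s₃w₃)|₀`. -/
def CartanF {n : ℕ} (L : Vec n × Vec n → ℝ) (x v w₁ w₂ w₃ : Vec n) : ℝ :=
  (1 / 4) * deriv (fun s₁ : ℝ => deriv (fun s₂ : ℝ => deriv (fun s₃ : ℝ =>
    L (x, v + s₁ • w₁ + s₂ • w₂ + s₃ • w₃)) 0) 0) 0

/-- `L` is a pseudo-Finsler metric on the conic domain `A ⊆ Ω × (ℝⁿ \ {0})`. -/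
structure IsPseudoFinsler {n : ℕ} (Ω : Set (Vec n)) (A : Set (Vec n × Vec n))
    (L : Vec n × Vec n → ℝ) : Prop where
  isOpen_base : IsOpen Ω
  isOpen_dom : IsOpen A
  dom_subset : ∀ p ∈ A, p.1 ∈ Ω ∧ p.2 ≠ 0
  conic : ∀ p ∈ A, ∀ lam : ℝ, 0 < lam → (p.1, lam • p.2) ∈ A
  smooth : ContDiffOn ℝ (⊤ : ℕ∞) L A
  homogeneous : ∀ p ∈ A, ∀ lam : ℝ, 0 < lam → L (p.1, lam • p.2) = lam ^ 2 * L p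
  g_symm : ∀ p ∈ A, ∀ u w, gF L p.1 p.2 u w = gF L p.1 p.2 w u
  g_add_left : ∀ p ∈ A, ∀ u₁ u₂ w,
    gF L p.1 p.2 (u₁ + u₂) w = gF L p.1 p.2 u₁ w + gF L p.1 p.2 u₂ w
  g_smul_left : ∀ p ∈ A, ∀ (c : ℝ) u w, gF L p.1 p.2 (c • u) w = c * gF L p.1 p.2 u w
  g_nondeg : ∀ p ∈ A, ∀ u, (∀ w, gF L p.1 p.2 u w = 0) → u = 0

/-- The affine connection associated to a connection datum `Γ`:
`(∇_X Y)(x) = (dY)_x(X(x)) + Γ(x)(X(x), Y(x))`. -/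
def nablaVF {n : ℕ} (Γ : Vec n → Bil n) (X Y : Vec n → Vec n) (x : Vec n) : Vec n :=
  fderiv ℝ Y x (X x) + Γ x (X x) (Y x)

/-- A connection datum is torsion-free on `Ω` if its values are symmetric bilinear maps. -/
def TorsionFree {n : ℕ} (Ω : Set (Vec n)) (Γ : Vec n → Bil n) : Prop :=
  ∀ x ∈ Ω, ∀ u w, Γ x u w = Γ x w u

/-- A vector field `V` on `Ω` is `L`-admissible if it is smooth and takes values in `A`. -/
def LAdmissible {n : ℕ} (A : Set (Vec n × Vec n)) (Ω : Set (Vec n))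
    (V : Vec n → Vec n) : Prop :=
  ContDiffOn ℝ (⊤ : ℕ∞) V Ω ∧ ∀ x ∈ Ω, (x, V x) ∈ A

/-- A connection datum `Γ` on `Ω` is almost `g`-compatible with reference `V`:
`X(g_V(Y,Z)) = g_V(∇_X Y, Z) + g_V(Y, ∇_X Z) + 2 C_V(∇_X V, Y, Z)`. -/
def AlmostGCompatible {n : ℕ} (L : Vec n × Vec n → ℝ) (Ω : Set (Vec n))
    (Γ : Vec n → Bil n) (V : Vec n → Vec n) : Prop :=
  ∀ X Y Z : Vec n → Vec n,
    ContDiffOn ℝ (⊤ : ℕ∞) X Ω → ContDiffOn ℝ (⊤ : ℕ∞) Y Ω → ContDiffOn ℝ (⊤ : ℕ∞) Z Ω →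
    ∀ x ∈ Ω,
      fderiv ℝ (fun y => gF L y (V y) (Y y) (Z y)) x (X x) =
        gF L x (V x) (nablaVF Γ X Y x) (Z x) + gF L x (V x) (Y x) (nablaVF Γ X Z x)
          + 2 * CartanF L x (V x) (nablaVF Γ X V x) (Y x) (Z x)

/-- Lie bracket of vector fields: `[X,Y](x) = (dY)_x(X(x)) − (dX)_x(Y(x))`. -/
def lieVF {n : ℕ} (X Y : Vec n → Vec n) (x : Vec n) : Vec n :=
  fderiv ℝ Y x (X x) - fderiv ℝ X x (Y x)

/-- Curvature tensor of a connection datum: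
`R(X,Y)Z = ∇_X∇_Y Z − ∇_Y∇_X Z − ∇_{[X,Y]}Z`. -/
def curvVF {n : ℕ} (Γ : Vec n → Bil n) (X Y Z : Vec n → Vec n) (x : Vec n) : Vec n :=
  nablaVF Γ X (nablaVF Γ Y Z) x - nablaVF Γ Y (nablaVF Γ X Z) x
    - nablaVF Γ (lieVF X Y) Z x

/-- Covariant derivative of the Cartan tensor:
`(∇^V_X C_V)(Y,Z,W)(x)`. -/
def nablaCartan {n : ℕ} (L : Vec n × Vec n → ℝ) (Γ : Vec n → Bil n)
    (V X Y Z W : Vec n → Vec n) (x : Vec n) : ℝ :=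
  fderiv ℝ (fun y => CartanF L y (V y) (Y y) (Z y) (W y)) x (X x)
    - CartanF L x (V x) (nablaVF Γ X Y x) (Z x) (W x)
    - CartanF L x (V x) (Y x) (nablaVF Γ X Z x) (W x)
    - CartanF L x (V x) (Y x) (Z x) (nablaVF Γ X W x)

/-- The tensor
`B^V(X,Y,Z,W) = (∇^V_Y C_V)(∇_X V, Z, W) − (∇^V_X C_V)(∇_Y V, Z, W) + C_V(R^V(Y,X)V, Z, W)`. -/
def BTensor {n : ℕ} (L : Vec n × Vec n → ℝ) (Γ : Vec n → Bil n)
    (V X Y Z W : Vec n → Vec n) (x : Vec n) : ℝ :=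
  nablaCartan L Γ V Y (nablaVF Γ X V) Z W x - nablaCartan L Γ V X (nablaVF Γ Y V) Z W x
    + CartanF L x (V x) (curvVF Γ Y X V x) (Z x) (W x)

/-- A Chern connection of `(L, A)`: a smooth family of symmetric bilinear maps on `A` which,
for every open `U` and every `L`-admissible smooth vector field `V` on `U`, yields a
torsion-free, almost `g`-compatible connection datum `x ↦ Γ(x, V(x))`. -/
def IsChernConnection {n : ℕ} (L : Vec n × Vec n → ℝ) (A : Set (Vec n × Vec n))
    (Γc : Vec n × Vec n → Bil n) : Prop :=
  ContDiffOn ℝ (⊤ : ℕ∞) Γc A ∧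
  (∀ p ∈ A, ∀ u w, Γc p u w = Γc p w u) ∧
  ∀ U : Set (Vec n), IsOpen U → ∀ V : Vec n → Vec n, ContDiffOn ℝ (⊤ : ℕ∞) V U →
    (∀ x ∈ U, (x, V x) ∈ A) →
    AlmostGCompatible L U (fun x => Γc (x, V x)) V

/-- Covariant derivative along a curve `γ` with reference `W`:
`(D^W_γ X)(t) = X'(t) + Γ(γ(t), W(t))(γ'(t), X(t))`. -/
def covDer {n : ℕ} (Γc : Vec n × Vec n → Bil n) (γ W X : ℝ → Vec n) (t : ℝ) : Vec n :=
  deriv X t + Γc (γ t, W t) (deriv γ t) (X t)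

/-- Contracted hh-curvature `R_{(p,v)}(v,u)w` of the Chern connection. -/
def hhCurv {n : ℕ} (Γc : Vec n × Vec n → Bil n) (p v u w : Vec n) : Vec n :=
  fderiv ℝ Γc (p, v) (u, 0) v w - fderiv ℝ Γc (p, v) (w, 0) v u
    - fderiv ℝ Γc (p, v) (0, Γc (p, v) v u) v w
    + fderiv ℝ Γc (p, v) (0, Γc (p, v) v w) v u
    + Γc (p, v) u (Γc (p, v) v w) - Γc (p, v) w (Γc (p, v) v u)

/-- Covariant derivative along the `t`-parameter curves of a two-parameter map `Λ`,
with reference vector `∂Λ/∂t`. -/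
def DtOp {n : ℕ} (Γc : Vec n × Vec n → Bil n) (Λ X : ℝ × ℝ → Vec n) (p : ℝ × ℝ) : Vec n :=
  deriv (fun t => X (t, p.2)) p.1
    + Γc (Λ p, deriv (fun t => Λ (t, p.2)) p.1) (deriv (fun t => Λ (t, p.2)) p.1) (X p)

/-- Covariant derivative along the `s`-parameter curves of a two-parameter map `Λ`,
with reference vector `∂Λ/∂t`. -/
def DsOp {n : ℕ} (Γc : Vec n × Vec n → Bil n) (Λ X : ℝ × ℝ → Vec n) (p : ℝ × ℝ) : Vec n :=
  deriv (fun s => X (p.1, s)) p.2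
    + Γc (Λ p, deriv (fun t => Λ (t, p.2)) p.1) (deriv (fun s => Λ (p.1, s)) p.2) (X p)

section Helpers

variable {F : Type*} [NormedAddCommGroup F] [NormedSpace ℝ F]

private lemma hasDerivAt_fst' {f : ℝ × ℝ → F} {q : ℝ × ℝ}
    (h : DifferentiableAt ℝ f q) :
    HasDerivAt (fun t => f (t, q.2)) (fderiv ℝ f q (1, 0)) q.1 :=
  h.hasFDerivAt.comp_hasDerivAt q.1 ((hasDerivAt_id q.1).prodMk (hasDerivAt_const q.1 q.2))

private lemma hasDerivAt_snd' {f : ℝ × ℝ → F} {q : ℝ × ℝ}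
    (h : DifferentiableAt ℝ f q) :
    HasDerivAt (fun s => f (q.1, s)) (fderiv ℝ f q (0, 1)) q.2 :=
  h.hasFDerivAt.comp_hasDerivAt q.2 ((hasDerivAt_const q.2 q.1).prodMk (hasDerivAt_id q.2))

private lemma hasDerivAt_comp_fst' {n : ℕ} {Λ : ℝ × ℝ → Vec n} {f : Vec n → Vec n}
    {q : ℝ × ℝ} (hf : DifferentiableAt ℝ f (Λ q)) (h : DifferentiableAt ℝ Λ q) :
    HasDerivAt (fun t => f (Λ (t, q.2))) (fderiv ℝ f (Λ q) (fderiv ℝ Λ q (1, 0))) q.1 :=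
  hf.hasFDerivAt.comp_hasDerivAt q.1 (hasDerivAt_fst' h)

private lemma hasDerivAt_comp_snd' {n : ℕ} {Λ : ℝ × ℝ → Vec n} {f : Vec n → Vec n}
    {q : ℝ × ℝ} (hf : DifferentiableAt ℝ f (Λ q)) (h : DifferentiableAt ℝ Λ q) :
    HasDerivAt (fun s => f (Λ (q.1, s))) (fderiv ℝ f (Λ q) (fderiv ℝ Λ q (0, 1))) q.2 :=
  hf.hasFDerivAt.comp_hasDerivAt q.2 (hasDerivAt_snd' h)

end Helpers

/-- If `V` and `U₀` extend the variational fields `∂Λ/∂t` and `∂Λ/∂s` of a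
two-parameter map `Λ`, and `W(t,s) = W̃(Λ(t,s))`, then
`(R^V(V,U₀)W̃)(Λ(t,s)) = (D_t D_s W)(t,s) − (D_s D_t W)(t,s)`,
both covariant derivatives being taken with reference `∂Λ/∂t`. -/
theorem curvature_via_two_parameter_map {n : ℕ} (hn : 1 ≤ n)
    (Ω : Set (Vec n)) (A : Set (Vec n × Vec n)) (L : Vec n × Vec n → ℝ)
    (hL : IsPseudoFinsler Ω A L)
    (Γc : Vec n × Vec n → Bil n) (hΓ : IsChernConnection L A Γc)
    (U : Set (Vec n)) (hU : IsOpen U) (hUΩ : U ⊆ Ω)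
    (D : Set (ℝ × ℝ)) (hD : IsOpen D)
    (Λ : ℝ × ℝ → Vec n) (hΛ : ContDiffOn ℝ (⊤ : ℕ∞) Λ D) (hΛU : ∀ p ∈ D, Λ p ∈ U)
    (V U₀ W₀ : Vec n → Vec n)
    (hVsm : ContDiffOn ℝ (⊤ : ℕ∞) V U) (hU₀sm : ContDiffOn ℝ (⊤ : ℕ∞) U₀ U) (hW₀sm : ContDiffOn ℝ (⊤ : ℕ∞) W₀ U)
    (hVadm : ∀ x ∈ U, (x, V x) ∈ A)
    (hVt : ∀ p ∈ D, V (Λ p) = deriv (fun t => Λ (t, p.2)) p.1)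
    (hUs : ∀ p ∈ D, U₀ (Λ p) = deriv (fun s => Λ (p.1, s)) p.2) :
    ∀ p ∈ D,
      curvVF (fun x => Γc (x, V x)) V U₀ W₀ (Λ p) =
        DtOp Γc Λ (DsOp Γc Λ (fun q => W₀ (Λ q))) p
          - DsOp Γc Λ (DtOp Γc Λ (fun q => W₀ (Λ q))) p := by
  intro p hp
  have hA : IsOpen A := hL.isOpen_dom
  set Γ : Vec n → Bil n := fun x => Γc (x, V x) with hΓdef
  -- basic smoothness facts
  have hΛat : ∀ q ∈ D, ContDiffAt ℝ (⊤ : ℕ∞) Λ q := fun q hq => hΛ.contDiffAt (hD.mem_nhds hq)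
  have hΛd : ∀ q ∈ D, DifferentiableAt ℝ Λ q :=
    fun q hq => (hΛat q hq).differentiableAt (by simp)
  have hVat : ∀ x ∈ U, ContDiffAt ℝ (⊤ : ℕ∞) V x := fun x hx => hVsm.contDiffAt (hU.mem_nhds hx)
  have hUat : ∀ x ∈ U, ContDiffAt ℝ (⊤ : ℕ∞) U₀ x := fun x hx => hU₀sm.contDiffAt (hU.mem_nhds hx)
  have hWat : ∀ x ∈ U, ContDiffAt ℝ (⊤ : ℕ∞) W₀ x := fun x hx => hW₀sm.contDiffAt (hU.mem_nhds hx)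
  have hGat : ∀ x ∈ U, ContDiffAt ℝ (⊤ : ℕ∞) Γ x := fun x hx =>
    (hΓ.1.contDiffAt (hA.mem_nhds (hVadm x hx))).comp x (contDiffAt_id.prodMk (hVat x hx))
  have hNabla : ∀ X Y : Vec n → Vec n, (∀ x ∈ U, ContDiffAt ℝ (⊤ : ℕ∞) X x) →
      (∀ x ∈ U, ContDiffAt ℝ (⊤ : ℕ∞) Y x) → ∀ x ∈ U, ContDiffAt ℝ (⊤ : ℕ∞) (nablaVF Γ X Y) x := by
    intro X Y hX hY x hx
    have h1 : ContDiffAt ℝ (⊤ : ℕ∞) (fun y => fderiv ℝ Y y (X y)) x :=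
      ((hY x hx).fderiv_right (by simp)).clm_apply (hX x hx)
    have h2 : ContDiffAt ℝ (⊤ : ℕ∞) (fun y => Γ y (X y) (Y y)) x :=
      ((hGat x hx).clm_apply (hX x hx)).clm_apply (hY x hx)
    exact h1.add h2
  -- the partial derivatives of Λ are given by V and U₀
  have hVderiv : ∀ q ∈ D, fderiv ℝ Λ q (1, 0) = V (Λ q) := by
    intro q hq
    rw [hVt q hq, ← (hasDerivAt_fst' (hΛd q hq)).deriv]
  have hUderiv : ∀ q ∈ D, fderiv ℝ Λ q (0, 1) = U₀ (Λ q) := by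
    intro q hq
    rw [hUs q hq, ← (hasDerivAt_snd' (hΛd q hq)).deriv]
  have chain_t : ∀ (f : Vec n → Vec n), ∀ q ∈ D, DifferentiableAt ℝ f (Λ q) →
      HasDerivAt (fun t => f (Λ (t, q.2))) (fderiv ℝ f (Λ q) (V (Λ q))) q.1 := by
    intro f q hq hf
    have := hasDerivAt_comp_fst' hf (hΛd q hq)
    rwa [hVderiv q hq] at this
  have chain_s : ∀ (f : Vec n → Vec n), ∀ q ∈ D, DifferentiableAt ℝ f (Λ q) →
      HasDerivAt (fun s => f (Λ (q.1, s))) (fderiv ℝ f (Λ q) (U₀ (Λ q))) q.2 := by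
    intro f q hq hf
    have := hasDerivAt_comp_snd' hf (hΛd q hq)
    rwa [hUderiv q hq] at this
  -- first covariant derivatives are restrictions of covariant derivatives of fields
  have key_s : ∀ q ∈ D, DsOp Γc Λ (fun r => W₀ (Λ r)) q = nablaVF Γ U₀ W₀ (Λ q) := by
    intro q hq
    have hx := hΛU q hq
    unfold DsOp nablaVF
    rw [(chain_s W₀ q hq ((hWat _ hx).differentiableAt (by simp))).deriv,
      ← hVt q hq, ← hUs q hq]
  have key_t : ∀ q ∈ D, DtOp Γc Λ (fun r => W₀ (Λ r)) q = nablaVF Γ V W₀ (Λ q) := by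
    intro q hq
    have hx := hΛU q hq
    unfold DtOp nablaVF
    rw [(chain_t W₀ q hq ((hWat _ hx).differentiableAt (by simp))).deriv, ← hVt q hq]
  have hx := hΛU p hp
  have hmem_t : {t : ℝ | (t, p.2) ∈ D} ∈ 𝓝 p.1 :=
    (hD.preimage (continuous_id.prodMk continuous_const)).mem_nhds hp
  have hmem_s : {s : ℝ | (p.1, s) ∈ D} ∈ 𝓝 p.2 :=
    (hD.preimage (continuous_const.prodMk continuous_id)).mem_nhds hp
  -- second covariant derivatives
  have outer_t : DtOp Γc Λ (DsOp Γc Λ (fun r => W₀ (Λ r))) p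
      = nablaVF Γ V (nablaVF Γ U₀ W₀) (Λ p) := by
    have hFd : DifferentiableAt ℝ (nablaVF Γ U₀ W₀) (Λ p) :=
      (hNabla U₀ W₀ hUat hWat _ hx).differentiableAt (by simp)
    have hev : (fun t => DsOp Γc Λ (fun r => W₀ (Λ r)) (t, p.2))
        =ᶠ[𝓝 p.1] fun t => nablaVF Γ U₀ W₀ (Λ (t, p.2)) := by
      filter_upwards [hmem_t] with t ht
      exact key_s (t, p.2) ht
    unfold DtOp
    rw [hev.deriv_eq, (chain_t (nablaVF Γ U₀ W₀) p hp hFd).deriv, ← hVt p hp, key_s p hp]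
    rfl
  have outer_s : DsOp Γc Λ (DtOp Γc Λ (fun r => W₀ (Λ r))) p
      = nablaVF Γ U₀ (nablaVF Γ V W₀) (Λ p) := by
    have hFd : DifferentiableAt ℝ (nablaVF Γ V W₀) (Λ p) :=
      (hNabla V W₀ hVat hWat _ hx).differentiableAt (by simp)
    have hev : (fun s => DtOp Γc Λ (fun r => W₀ (Λ r)) (p.1, s))
        =ᶠ[𝓝 p.2] fun s => nablaVF Γ V W₀ (Λ (p.1, s)) := by
      filter_upwards [hmem_s] with s hs
      exact key_t (p.1, s) hs
    unfold DsOp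
    rw [hev.deriv_eq, (chain_s (nablaVF Γ V W₀) p hp hFd).deriv, ← hVt p hp, ← hUs p hp,
      key_t p hp]
    rfl
  -- the Lie bracket of V and U₀ vanishes along Λ (symmetry of second derivatives)
  have hlie : lieVF V U₀ (Λ p) = 0 := by
    set Φ : ℝ × ℝ → (ℝ × ℝ) →L[ℝ] Vec n := fderiv ℝ Λ with hΦdef
    have hΦat : ContDiffAt ℝ (⊤ : ℕ∞) Φ p := (hΛat p hp).fderiv_right (by simp)
    have hΦd : DifferentiableAt ℝ Φ p := hΦat.differentiableAt (by simp)
    have hsym : IsSymmSndFDerivAt ℝ Λ p := (hΛat p hp).isSymmSndFDerivAt (by rw [minSmoothness_of_isRCLikeNormedField]; exact WithTop.coe_le_coe.mpr (le_top : (2 : ℕ∞) ≤ ⊤))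
    -- mixed partial: t then s
    have h1 : HasDerivAt (fun t => Φ (t, p.2) ((0 : ℝ), (1 : ℝ)))
        (fderiv ℝ Φ p (1, 0) (0, 1)) p.1 := by
      have := (hasDerivAt_fst' hΦd).clm_apply (hasDerivAt_const p.1 ((0 : ℝ), (1 : ℝ)))
      simpa using this
    have h2 : HasDerivAt (fun s => Φ (p.1, s) ((1 : ℝ), (0 : ℝ)))
        (fderiv ℝ Φ p (0, 1) (1, 0)) p.2 := by
      have := (hasDerivAt_snd' hΦd).clm_apply (hasDerivAt_const p.2 ((1 : ℝ), (0 : ℝ)))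
      simpa using this
    have hev1 : (fun t => U₀ (Λ (t, p.2))) =ᶠ[𝓝 p.1]
        fun t => Φ (t, p.2) ((0 : ℝ), (1 : ℝ)) := by
      filter_upwards [hmem_t] with t ht
      rw [hUs (t, p.2) ht]
      exact (hasDerivAt_snd' (hΛd (t, p.2) ht)).deriv
    have hev2 : (fun s => V (Λ (p.1, s))) =ᶠ[𝓝 p.2]
        fun s => Φ (p.1, s) ((1 : ℝ), (0 : ℝ)) := by
      filter_upwards [hmem_s] with s hs
      rw [hVt (p.1, s) hs]
      exact (hasDerivAt_fst' (hΛd (p.1, s) hs)).deriv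
    have e1 : fderiv ℝ U₀ (Λ p) (V (Λ p)) = fderiv ℝ Φ p (1, 0) (0, 1) :=
      (((chain_t U₀ p hp ((hUat _ hx).differentiableAt (by simp))).congr_of_eventuallyEq
        hev1.symm).unique h1)
    have e2 : fderiv ℝ V (Λ p) (U₀ (Λ p)) = fderiv ℝ Φ p (0, 1) (1, 0) :=
      (((chain_s V p hp ((hVat _ hx).differentiableAt (by simp))).congr_of_eventuallyEq
        hev2.symm).unique h2)
    unfold lieVF
    rw [e1, e2, hsym (1, 0) (0, 1), sub_self]
  have hnl : nablaVF Γ (lieVF V U₀) W₀ (Λ p) = 0 := by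
    unfold nablaVF
    rw [hlie]
    simp
  unfold curvVF
  rw [outer_t, outer_s, hnl, sub_zero]
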